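/- Let E be a finite-dimensional real inner product space, let f : E → ℝ be locally Lipschitz, and let x̄ ∈ E. Assume f grows quadratically at x̄: there are δ > 0 and ρ' > 0 with f(x) − f(x̄) ≥ (δ/2)·‖x − x̄‖² whenever ‖x − x̄‖ ≤ ρ'. Assume further that f has the Goldstein property at x̄ with proportionality bracket [μ, ν]: there are constants ν > μ > 0, θ ∈ (0,1) and ρ > 0 such that for every x with 0 < ‖x − x̄‖ ≤ ρ and every ε with μ·‖x − x̄‖ ≤ ε ≤ ν·‖x − x̄‖, the Goldstein subgradient g_ε(x) is nonzero and the point x⁺ := x − (ε/‖g_ε(x)‖)·g_ε(x) satisfies f(x⁺) − f(x̄) ≤ θ·(f(x) − f(x̄)) or ‖x⁺ − x̄‖ ≤ θ·‖x − x̄‖. Then there exists η > 0 with the following property: for every sequence (x_r)_{r≥0} with ‖x₀ − x̄‖ ≤ η such that for each r either x_r = x̄ and x_{r+1} = x̄, or x_r ≠ x̄ and x_{r+1} = x_r − (ε_r/‖g_{ε_r}(x_r)‖)·g_{ε_r}(x_r) for some ε_r with μ·‖x_r − x̄‖ ≤ ε_r ≤ ν·‖x_r − x̄‖, there exist constants a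 > 0 and b > 0 with ‖x_r − x̄‖ ≤ a·exp(−b·√r) for all r ≥ 0. -/

import Mathlib

/-!
A Goldstein step of length `ε` never increases `f`: every Clarke gradient in the
`ε`-ball has a positive component along the minimal-norm element `g_ε(x)`, and averaging over
thin tubes around the step (Rademacher) turns this into monotonicity of `f` along the step.
With quadratic growth, `f(x₀) - f(xbar) = O(‖x₀ - xbar‖)` then keeps the whole sequence in the
region where the Goldstein property applies. Each step shrinks `f - f(xbar)` or `‖x - xbar‖` by
the factor `θ`, while `f` never increases and `‖x - xbar‖` grows at most by `1 + ν`, so a weighted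
sum of the logarithms of the two quantities drops by a fixed amount per step; quadratic growth
turns this into a bound `‖x_r - xbar‖ ≤ a exp (-b r)`, stronger than the one claimed.
-/

open Filter Topology Metric Set
open scoped Classical

variable {E : Type*} [NormedAddCommGroup E] [InnerProductSpace ℝ E] [FiniteDimensional ℝ E]

/-- The Clarke subdifferential: the closed convex hull of all limits of gradients
along sequences of points of differentiability converging to `x`. -/
noncomputable def clarkeSubdiff (f : E → ℝ) (x : E) : Set E :=
  closure (convexHull ℝ {v : E | ∃ u : ℕ → E,
    (∀ n, DifferentiableAt ℝ f (u n)) ∧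
    Tendsto u atTop (𝓝 x) ∧
    Tendsto (fun n => gradient f (u n)) atTop (𝓝 v)})

/-- The Goldstein subdifferential of radius `ε`. -/
noncomputable def goldsteinSubdiff (f : E → ℝ) (x : E) (ε : ℝ) : Set E :=
  convexHull ℝ (⋃ y ∈ Metric.closedBall x ε, clarkeSubdiff f y)

/-- The element of minimal norm of a set (junk value `0` if no minimizer exists). -/
noncomputable def minNorm (s : Set E) : E :=
  if h : ∃ v, v ∈ s ∧ ∀ w ∈ s, ‖v‖ ≤ ‖w‖ then h.choose else 0

/-- The Goldstein subgradient: the minimal-norm element of the Goldstein subdifferential. -/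
noncomputable def goldsteinGrad (f : E → ℝ) (x : E) (ε : ℝ) : E :=
  minNorm (goldsteinSubdiff f x ε)

/-- The Goldstein modulus `Γf(x) = inf {ε ≥ 0 : ‖g_ε(x)‖ ≤ ε}`. -/
noncomputable def goldsteinModulus (f : E → ℝ) (x : E) : ℝ :=
  sInf {ε : ℝ | 0 ≤ ε ∧ ‖goldsteinGrad f x ε‖ ≤ ε}

open MeasureTheory
open scoped NNReal RealInnerProductSpace

section LipschitzAveraging

variable {V : Type*} [NormedAddCommGroup V] [NormedSpace ℝ V] [FiniteDimensional ℝ V]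
  {g : V → ℝ} {L : ℝ≥0}

theorem LipschitzWith.hasDerivAt_setIntegral_comp_add_smul_add [MeasurableSpace V] [BorelSpace V]
    (hg : LipschitzWith L g) (μ : Measure V) [μ.IsAddHaarMeasure] {s : Set V} (hs : IsCompact s) (x v : V) (t : ℝ) :
    HasDerivAt (fun t ↦ ∫ z in s, g (x + t • v + z) ∂μ)
      (∫ z in s, fderiv ℝ g (x + t • v + z) v ∂μ) t := by
  have : IsFiniteMeasure (μ.restrict s) := isFiniteMeasure_restrict.2 hs.measure_lt_top.ne
  have hcont : ∀ t : ℝ, Continuous fun z ↦ g (x + t • v + z) := fun t ↦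
    hg.continuous.comp (continuous_const_add _)
  have hline : ∀ z, LipschitzWith (L * ‖v‖₊) fun t : ℝ ↦ g (x + t • v + z) := fun z ↦
    hg.comp <| LipschitzWith.of_dist_le_mul fun a b ↦ by
      rw [dist_eq_norm, Real.dist_eq, show x + a • v + z - (x + b • v + z) = (a - b) • v by module,
        norm_smul, Real.norm_eq_abs, coe_nnnorm, mul_comm]
  have hdiff : ∀ᵐ z ∂μ.restrict s,
      HasDerivAt (fun t ↦ g (x + t • v + z)) (fderiv ℝ g (x + t • v + z) v) t := by
    refine ae_restrict_of_ae ?_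
    filter_upwards [(measurePreserving_add_left μ (x + t • v)).quasiMeasurePreserving.ae
      hg.ae_differentiableAt] with z hz
    have hpath : HasDerivAt (fun t : ℝ ↦ x + t • v + z) v t := by
      simpa using (((hasDerivAt_id t).smul_const v).const_add x).add_const z
    exact hz.hasFDerivAt.comp_hasDerivAt t hpath
  refine (hasDerivAt_integral_of_dominated_loc_of_lip (bound := fun _ ↦ (L * ‖v‖₊ : ℝ≥0))
    univ_mem (.of_forall fun t ↦ (hcont t).aestronglyMeasurable)
    ((hcont t).continuousOn.integrableOn_compact hs) ?_ (.of_forall fun z ↦ ?_)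
    (integrable_const _) hdiff).2
  · exact ((measurable_fderiv_apply_const ℝ g v).comp
      (measurable_const_add _)).aestronglyMeasurable
  · rw [Real.nnabs_coe]
    exact (hline z).lipschitzOnWith

theorem LipschitzWith.abs_setIntegral_closedBall_sub_le [MeasurableSpace V] [BorelSpace V]
    (hg : LipschitzWith L g) (μ : Measure V) [IsFiniteMeasureOnCompacts μ] (y : V) (σ : ℝ) :
    |∫ z in closedBall 0 σ, g (y + z) ∂μ - μ.real (closedBall 0 σ) * g y| ≤
      L * σ * μ.real (closedBall 0 σ) := by
  have hint : IntegrableOn (fun z ↦ g (y + z)) (closedBall 0 σ) μ :=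
    (hg.continuous.comp (continuous_const_add y)).continuousOn.integrableOn_compact
      (isCompact_closedBall 0 σ)
  rw [← smul_eq_mul, ← setIntegral_const, ← integral_sub hint (integrableOn_const ?_),
    ← Real.norm_eq_abs]
  · refine norm_setIntegral_le_of_norm_le_const measure_closedBall_lt_top fun z hz ↦ ?_
    calc ‖g (y + z) - g y‖ ≤ L * ‖z‖ := by
          simpa [dist_eq_norm] using hg.dist_le_mul (y + z) y
      _ ≤ L * σ := by gcongr; simpa using hz
  · exact measure_closedBall_lt_top.ne

/-- The average of `g` over a `σ`-ball moving along the segment is nonincreasing, since its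
derivative averages `fderiv g · v`, which is `≤ 0` a.e.; averages and values differ by `≤ L σ`. -/
theorem LipschitzWith.apply_add_le_of_fderiv_apply_nonpos_cthickening (hg : LipschitzWith L g)
    {x v : V} {σ : ℝ} (hσ : 0 < σ)
    (hderiv : ∀ y ∈ cthickening σ (segment ℝ x (x + v)),
      DifferentiableAt ℝ g y → fderiv ℝ g y v ≤ 0) :
    g (x + v) ≤ g x + 2 * L * σ := by
  borelize V
  set μ := (Module.finBasis ℝ V).addHaar
  set B := closedBall (0 : V) σ
  set I := fun t : ℝ ↦ ∫ z in B, g (x + t • v + z) ∂μ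
  have hI : ∀ t, HasDerivAt I (∫ z in B, fderiv ℝ g (x + t • v + z) v ∂μ) t :=
    hg.hasDerivAt_setIntegral_comp_add_smul_add μ (isCompact_closedBall 0 σ) x v
  have hI' : ∀ t ∈ Icc (0 : ℝ) 1, ∫ z in B, fderiv ℝ g (x + t • v + z) v ∂μ ≤ 0 := by
    intro t ht
    refine integral_nonpos_of_ae ?_
    filter_upwards [ae_restrict_mem measurableSet_closedBall, ae_restrict_of_ae
      ((measurePreserving_add_left μ (x + t • v)).quasiMeasurePreserving.ae
        hg.ae_differentiableAt)] with z hzB hz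
    refine hderiv _ (mem_cthickening_of_dist_le _ (x + t • v) _ _ ?_ ?_) hz
    · rw [segment_eq_image']
      exact ⟨t, ht, by simp⟩
    · simpa [B] using hzB
  have hanti : I 1 ≤ I 0 :=
    antitoneOn_of_hasDerivWithinAt_nonpos (convex_Icc 0 1)
      (fun t _ ↦ (hI t).continuousAt.continuousWithinAt)
      (fun t _ ↦ (hI t).hasDerivWithinAt)
      (fun t ht ↦ hI' t (interior_subset ht)) (by simp) (by simp) zero_le_one
  have hV : 0 < μ.real B :=
    ENNReal.toReal_pos (measure_closedBall_pos μ 0 hσ).ne' measure_closedBall_lt_top.ne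
  have h0 := abs_le.1 (hg.abs_setIntegral_closedBall_sub_le μ x σ)
  have h1 := abs_le.1 (hg.abs_setIntegral_closedBall_sub_le μ (x + v) σ)
  simp only [I, zero_smul, add_zero, one_smul] at hanti
  refine le_of_mul_le_mul_left ?_ hV
  nlinarith

theorem LipschitzWith.apply_add_le_of_fderiv_apply_nonpos (hg : LipschitzWith L g) {U : Set V}
    (hU : IsOpen U) {x v : V} (hxv : segment ℝ x (x + v) ⊆ U)
    (hderiv : ∀ y ∈ U, DifferentiableAt ℝ g y → fderiv ℝ g y v ≤ 0) :
    g (x + v) ≤ g x := by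
  have hcompact : IsCompact (segment ℝ x (x + v)) := by
    rw [segment_eq_image']
    exact isCompact_Icc.image (by fun_prop)
  obtain ⟨σ₀, hσ₀, hsub⟩ := hcompact.exists_cthickening_subset_open hU hxv
  have hlim : Tendsto (fun σ : ℝ ↦ g x + 2 * L * σ) (𝓝[>] 0) (𝓝 (g x)) := by
    have : Continuous fun σ : ℝ ↦ g x + 2 * L * σ := by fun_prop
    simpa using (this.tendsto 0).mono_left nhdsWithin_le_nhds
  refine ge_of_tendsto hlim ?_
  filter_upwards [Ioo_mem_nhdsGT hσ₀] with σ hσ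
  exact hg.apply_add_le_of_fderiv_apply_nonpos_cthickening hσ.1 fun y hy ↦
    hderiv y (hsub (cthickening_mono hσ.2.le _ hy))

end LipschitzAveraging

section MinNorm

variable {F : Type*} [NormedAddCommGroup F]

theorem minNorm_spec_of_ne_zero {s : Set F} (h : minNorm s ≠ 0) :
    minNorm s ∈ s ∧ ∀ w ∈ s, ‖minNorm s‖ ≤ ‖w‖ := by
  unfold minNorm at h ⊢
  split_ifs at h ⊢ with hex
  · exact hex.choose_spec
  · exact absurd rfl h

theorem sq_norm_minNorm_le_inner [InnerProductSpace ℝ F] {s : Set F} (hs : Convex ℝ s)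
    (h : minNorm s ≠ 0) {w : F} (hw : w ∈ s) : ‖minNorm s‖ ^ 2 ≤ ⟪minNorm s, w⟫ := by
  obtain ⟨hmem, hmin⟩ := minNorm_spec_of_ne_zero h
  have : Nonempty s := ⟨⟨_, hmem⟩⟩
  have hproj : ‖0 - minNorm s‖ = ⨅ w : s, ‖0 - (w : F)‖ :=
    le_antisymm (le_ciInf fun w ↦ by simpa using hmin w w.2)
      (ciInf_le ⟨0, by rintro _ ⟨w, rfl⟩; exact norm_nonneg _⟩ (⟨minNorm s, hmem⟩ : s))
  have := (norm_eq_iInf_iff_real_inner_le_zero hs hmem).1 hproj w hw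
  rw [zero_sub, inner_neg_left, inner_sub_right, real_inner_self_eq_norm_sq] at this
  linarith

end MinNorm

section Goldstein

variable {f : E → ℝ} {x y xbar : E} {ε μ ν θ ρ : ℝ}

theorem gradient_mem_clarkeSubdiff (hf : DifferentiableAt ℝ f y) :
    gradient f y ∈ clarkeSubdiff f y :=
  subset_closure <| subset_convexHull ℝ _
    ⟨fun _ ↦ y, fun _ ↦ hf, tendsto_const_nhds, tendsto_const_nhds⟩

theorem clarkeSubdiff_subset_goldsteinSubdiff (hy : y ∈ closedBall x ε) :
    clarkeSubdiff f y ⊆ goldsteinSubdiff f x ε :=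
  fun _ hv ↦ subset_convexHull ℝ _ (mem_biUnion hy hv)

theorem sq_norm_goldsteinGrad_le_inner_gradient (hg : goldsteinGrad f x ε ≠ 0)
    (hy : y ∈ closedBall x ε) (hf : DifferentiableAt ℝ f y) :
    ‖goldsteinGrad f x ε‖ ^ 2 ≤ ⟪goldsteinGrad f x ε, gradient f y⟫ :=
  sq_norm_minNorm_le_inner (convex_convexHull ℝ _) hg
    (clarkeSubdiff_subset_goldsteinSubdiff hy (gradient_mem_clarkeSubdiff hf))

noncomputable def goldsteinStep (f : E → ℝ) (x : E) (ε : ℝ) : E :=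
  x - (ε / ‖goldsteinGrad f x ε‖) • goldsteinGrad f x ε

theorem norm_goldsteinStep_sub_self (hε : 0 ≤ ε) (hg : goldsteinGrad f x ε ≠ 0) :
    ‖goldsteinStep f x ε - x‖ = ε := by
  rw [goldsteinStep, sub_sub_cancel_left, norm_neg, norm_smul, Real.norm_of_nonneg (by positivity),
    div_mul_cancel₀ _ (norm_ne_zero_iff.2 hg)]

theorem LocallyLipschitz.apply_goldsteinStep_le (hf : LocallyLipschitz f) (hε : 0 < ε)
    (hg : goldsteinGrad f x ε ≠ 0) : f (goldsteinStep f x ε) ≤ f x := by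
  set G := goldsteinGrad f x ε
  set u := -((ε / ‖G‖) • G)
  have hu : ‖u‖ = ε := by
    rw [← norm_goldsteinStep_sub_self hε.le hg, goldsteinStep, sub_sub_cancel_left]
  obtain ⟨K, hK⟩ := hf.locallyLipschitzOn.exists_lipschitzOnWith_of_compact
    (isCompact_closedBall x (ε + 1))
  obtain ⟨g, hgK, hfg⟩ := hK.extend_real
  have hdesc : ∀ y ∈ ball x ε, DifferentiableAt ℝ g y → fderiv ℝ g y u ≤ 0 := by
    intro y hy hgy
    have hfg_y : f =ᶠ[𝓝 y] g := hfg.eventuallyEq_of_mem <| mem_of_superset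
      (isOpen_ball.mem_nhds (ball_subset_ball (by linarith) hy)) ball_subset_closedBall
    have hGy := sq_norm_goldsteinGrad_le_inner_gradient hg (ball_subset_closedBall hy)
      (hgy.congr_of_eventuallyEq hfg_y)
    rw [← hfg_y.fderiv_eq, ← inner_gradient_left, inner_neg_right, real_inner_smul_right,
      real_inner_comm, neg_nonpos]
    exact mul_nonneg (by positivity) ((sq_nonneg _).trans hGy)
  have hseg : ∀ s ∈ Ico (0 : ℝ) 1, g (x + s • u) ≤ g x := by
    intro s hs
    refine hgK.apply_add_le_of_fderiv_apply_nonpos isOpen_ball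
      ((convex_ball x ε).segment_subset (mem_ball_self hε) ?_) fun y hy hgy ↦ ?_
    · rw [mem_ball_iff_norm, add_sub_cancel_left, norm_smul, hu, Real.norm_of_nonneg hs.1]
      nlinarith [hs.2]
    · rw [map_smul, smul_eq_mul]
      exact mul_nonpos_of_nonneg_of_nonpos hs.1 (hdesc y hy hgy)
  have hone : (1 : ℝ) ∈ {s : ℝ | g (x + s • u) ≤ g x} := by
    refine (isClosed_le (hgK.continuous.comp (by fun_prop)) continuous_const).closure_subset_iff.2
      hseg ?_
    rw [closure_Ico zero_ne_one]
    exact ⟨zero_le_one, le_rfl⟩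
  have hstep : goldsteinStep f x ε = x + u := by rw [goldsteinStep, sub_eq_add_neg]
  rw [hstep, hfg (mem_closedBall_self (by linarith)), hfg ?_]
  · simpa using hone
  · rw [mem_closedBall, dist_self_add_left, hu]
    linarith

def HasGoldsteinProperty (f : E → ℝ) (xbar : E) (μ ν θ ρ : ℝ) : Prop :=
  ∀ x : E, 0 < ‖x - xbar‖ → ‖x - xbar‖ ≤ ρ → ∀ ε : ℝ,
    μ * ‖x - xbar‖ ≤ ε → ε ≤ ν * ‖x - xbar‖ →
    goldsteinGrad f x ε ≠ 0 ∧
    (f (goldsteinStep f x ε) - f xbar ≤ θ * (f x - f xbar) ∨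
      ‖goldsteinStep f x ε - xbar‖ ≤ θ * ‖x - xbar‖)

def IsGoldsteinSequence (f : E → ℝ) (xbar : E) (μ ν : ℝ) (x : ℕ → E) : Prop :=
  ∀ r : ℕ, (x r = xbar ∧ x (r + 1) = xbar) ∨
    (x r ≠ xbar ∧ ∃ ε : ℝ, μ * ‖x r - xbar‖ ≤ ε ∧ ε ≤ ν * ‖x r - xbar‖ ∧
      x (r + 1) = goldsteinStep f (x r) ε)

theorem IsGoldsteinSequence.step {x : ℕ → E} (hx : IsGoldsteinSequence f xbar μ ν x)
    (hf : LocallyLipschitz f) (hμ : 0 < μ) (hG : HasGoldsteinProperty f xbar μ ν θ ρ) {r : ℕ}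
    (hr : ‖x r - xbar‖ ≤ ρ) :
    f (x (r + 1)) - f xbar ≤ f (x r) - f xbar ∧
      ‖x (r + 1) - xbar‖ ≤ (1 + ν) * ‖x r - xbar‖ ∧
      (f (x (r + 1)) - f xbar ≤ θ * (f (x r) - f xbar) ∨
        ‖x (r + 1) - xbar‖ ≤ θ * ‖x r - xbar‖) := by
  rcases hx r with ⟨hxr, hxr'⟩ | ⟨hxr, ε, hμε, hεν, hxr'⟩
  · simp [hxr, hxr']
  have hpos : 0 < ‖x r - xbar‖ := norm_pos_iff.2 (sub_ne_zero.2 hxr)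
  have hε : 0 < ε := (mul_pos hμ hpos).trans_le hμε
  obtain ⟨hg, hdich⟩ := hG (x r) hpos hr ε hμε hεν
  rw [hxr']
  refine ⟨by linarith [hf.apply_goldsteinStep_le hε hg], ?_, hdich⟩
  calc ‖goldsteinStep f (x r) ε - xbar‖
      ≤ ‖goldsteinStep f (x r) ε - x r‖ + ‖x r - xbar‖ := norm_sub_le_norm_sub_add_norm_sub _ _ _
    _ ≤ (1 + ν) * ‖x r - xbar‖ := by
      rw [norm_goldsteinStep_sub_self hε.le hg]
      linarith

end Goldstein

section Rates

open Real

variable {d F : ℕ → ℝ} {κ Λ θ R : ℝ}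

theorem forall_le_of_descent_of_quadratic_growth (hd : ∀ r, 0 ≤ d r) (hκ : 0 < κ) (hΛ : 0 ≤ Λ)
    (hstep : ∀ r, d r ≤ R → F (r + 1) ≤ F r ∧ d (r + 1) ≤ Λ * d r)
    (hgrowth : ∀ r, d r ≤ Λ * R → κ * d r ^ 2 ≤ F r) (hd0 : d 0 ≤ R) (hF0 : F 0 ≤ κ * R ^ 2) :
    ∀ r, d r ≤ R := by
  suffices h : ∀ r, d r ≤ R ∧ F r ≤ F 0 from fun r ↦ (h r).1
  intro r
  induction r with
  | zero => exact ⟨hd0, le_rfl⟩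
  | succ n ih =>
    obtain ⟨hFn, hdn⟩ := hstep n ih.1
    have hF : F (n + 1) ≤ F 0 := hFn.trans ih.2
    have hκd : κ * d (n + 1) ^ 2 ≤ κ * R ^ 2 :=
      ((hgrowth (n + 1) (hdn.trans (by gcongr; exact ih.1))).trans hF).trans hF0
    refine ⟨?_, hF⟩
    nlinarith [hd (n + 1), hd 0, le_of_mul_le_mul_left hκd hκ]

/-- The potential `p log d + (p + q) log F`, with `θ = exp (-p)` and `Λ = exp q`, drops by `p ^ 2`
in either branch of the dichotomy. -/
theorem log_potential_step {d d' F F' : ℝ} (hd : 0 < d) (hd' : 0 < d') (hF' : 0 < F')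
    (hθ₀ : 0 < θ) (hθ₁ : θ ≤ 1) (hΛ : 1 ≤ Λ) (hF : F' ≤ F) (hdΛ : d' ≤ Λ * d)
    (hdich : F' ≤ θ * F ∨ d' ≤ θ * d) :
    -log θ * log d' + (-log θ + log Λ) * log F' + log θ ^ 2 ≤
      -log θ * log d + (-log θ + log Λ) * log F := by
  have hp : 0 ≤ -log θ := neg_nonneg.2 (log_nonpos hθ₀.le hθ₁)
  have hq : 0 ≤ log Λ := log_nonneg hΛ
  have hlogd : log d' ≤ log Λ + log d := by
    rw [← log_mul (by positivity) hd.ne']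
    exact log_le_log hd' hdΛ
  have hlogF : log F' ≤ log F := log_le_log hF' hF
  rcases hdich with hθF | hθd
  · have : log F' ≤ log θ + log F := by
      rw [← log_mul hθ₀.ne' (hF'.trans_le hF).ne']
      exact log_le_log hF' hθF
    nlinarith [mul_le_mul_of_nonneg_left hlogd hp,
      mul_le_mul_of_nonneg_left this (add_nonneg hp hq)]
  · have : log d' ≤ log θ + log d := by
      rw [← log_mul hθ₀.ne' hd.ne']
      exact log_le_log hd' hθd
    nlinarith [mul_le_mul_of_nonneg_left this hp,
      mul_le_mul_of_nonneg_left hlogF (add_nonneg hp hq)]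

theorem exists_le_mul_exp_neg_mul_of_dichotomy (hd : ∀ r, 0 ≤ d r) (hκ : 0 < κ) (hθ₀ : 0 < θ)
    (hθ₁ : θ < 1) (hΛ : 1 ≤ Λ) (hgrowth : ∀ r, κ * d r ^ 2 ≤ F r)
    (hstep : ∀ r, F (r + 1) ≤ F r ∧ d (r + 1) ≤ Λ * d r ∧
      (F (r + 1) ≤ θ * F r ∨ d (r + 1) ≤ θ * d r)) :
    ∃ a > 0, ∃ b > 0, ∀ r : ℕ, d r ≤ a * exp (-b * r) := by
  set p := -log θ
  set q := log Λ
  set ψ := fun r ↦ p * log (d r) + (p + q) * log (F r)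
  have hp : 0 < p := neg_pos.2 (log_neg hθ₀ hθ₁)
  have hq : 0 ≤ q := log_nonneg hΛ
  have hFpos : ∀ r, 0 < d r → 0 < F r := fun r hr ↦
    (by positivity : 0 < κ * d r ^ 2).trans_le (hgrowth r)
  have hψ : ∀ r, 0 < d r → ψ r + p ^ 2 * r ≤ ψ 0 := by
    intro r hr
    induction r with
    | zero => simp
    | succ n ih =>
      have hn : 0 < d n := (hd n).lt_of_ne fun h ↦ by
        nlinarith [(hstep n).2.1, h.symm]
      have := log_potential_step hn hr (hFpos _ hr) hθ₀ hθ₁.le hΛ (hstep n).1 (hstep n).2.1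
        (hstep n).2.2
      simp only [ψ, Nat.cast_succ] at this ih ⊢
      nlinarith [ih hn]
  set b := p ^ 2 / (3 * p + 2 * q)
  set c := (ψ 0 - (p + q) * log κ) / (3 * p + 2 * q)
  refine ⟨exp c, exp_pos c, b, by positivity, fun r ↦ ?_⟩
  rcases (hd r).eq_or_lt with hr | hr
  · rw [← hr]
    positivity
  have hlogF : log κ + 2 * log (d r) ≤ log (F r) := by
    have := log_le_log (by positivity) (hgrowth r)
    rwa [log_mul hκ.ne' (by positivity), log_pow, Nat.cast_ofNat] at this
  have hlogd : log (d r) ≤ c - b * r := by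
    rw [div_mul_eq_mul_div, div_sub_div_same, le_div_iff₀ (by positivity)]
    nlinarith [hψ r hr, mul_le_mul_of_nonneg_left hlogF (by positivity : 0 ≤ p + q)]
  calc d r = exp (log (d r)) := (exp_log hr).symm
    _ ≤ exp (c - b * r) := exp_le_exp.2 hlogd
    _ = exp c * exp (-b * r) := by rw [← exp_add]; ring_nf

theorem Real.sqrt_natCast_le_self (r : ℕ) : √(r : ℝ) ≤ r :=
  sqrt_le_self_iff.2 <| r.eq_zero_or_pos.imp (fun h ↦ by simp [h]) fun h ↦ Nat.one_le_cast.2 h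

end Rates

theorem stmt13 (f : E → ℝ) (hf : LocallyLipschitz f) (xbar : E)
    (δ ρ' : ℝ) (hδ : 0 < δ) (hρ' : 0 < ρ')
    (hgrow : ∀ x : E, ‖x - xbar‖ ≤ ρ' → f x - f xbar ≥ δ / 2 * ‖x - xbar‖ ^ 2)
    (μ ν θ ρ : ℝ) (hμ : 0 < μ) (hμν : μ < ν) (hθ₀ : 0 < θ) (hθ₁ : θ < 1) (hρ : 0 < ρ)
    (hgold : ∀ x : E, 0 < ‖x - xbar‖ → ‖x - xbar‖ ≤ ρ → ∀ ε : ℝ,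
      μ * ‖x - xbar‖ ≤ ε → ε ≤ ν * ‖x - xbar‖ →
      goldsteinGrad f x ε ≠ 0 ∧
      (f (x - (ε / ‖goldsteinGrad f x ε‖) • goldsteinGrad f x ε) - f xbar ≤
          θ * (f x - f xbar) ∨
        ‖x - (ε / ‖goldsteinGrad f x ε‖) • goldsteinGrad f x ε - xbar‖ ≤ θ * ‖x - xbar‖)) :
    ∃ η > 0, ∀ x : ℕ → E, ‖x 0 - xbar‖ ≤ η →
      (∀ r : ℕ, (x r = xbar ∧ x (r + 1) = xbar) ∨
        (x r ≠ xbar ∧ ∃ ε : ℝ, μ * ‖x r - xbar‖ ≤ ε ∧ ε ≤ ν * ‖x r - xbar‖ ∧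
          x (r + 1) =
            x r - (ε / ‖goldsteinGrad f (x r) ε‖) • goldsteinGrad f (x r) ε)) →
      ∃ a > 0, ∃ b > 0, ∀ r : ℕ, ‖x r - xbar‖ ≤ a * Real.exp (-b * Real.sqrt r) := by
  have hν : 0 < ν := hμ.trans hμν
  obtain ⟨K, hK⟩ := hf.locallyLipschitzOn.exists_lipschitzOnWith_of_compact
    (isCompact_closedBall xbar 1)
  -- `R ≤ ρ` for the Goldstein property, `(1 + ν) R ≤ ρ'` for quadratic growth after one step
  set R := min ρ (ρ' / (1 + ν))
  have hR : 0 < R := lt_min hρ (by positivity)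
  refine ⟨min (min R 1) (δ * R ^ 2 / (2 * (K + 1))), by positivity, fun x hx0 hx ↦ ?_⟩
  have hG : HasGoldsteinProperty f xbar μ ν θ ρ := hgold
  have hstep := fun r (hr : ‖x r - xbar‖ ≤ R) ↦
    IsGoldsteinSequence.step hx hf hμ hG (hr.trans (min_le_left _ _))
  have hgrowth : ∀ r, ‖x r - xbar‖ ≤ (1 + ν) * R →
      δ / 2 * ‖x r - xbar‖ ^ 2 ≤ f (x r) - f xbar := fun r hr ↦
    hgrow (x r) (hr.trans ((le_div_iff₀' (by positivity)).1 (min_le_right _ _)))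
  have hF0 : f (x 0) - f xbar ≤ δ / 2 * R ^ 2 := by
    have hx01 : x 0 ∈ closedBall xbar 1 := mem_closedBall_iff_norm.2
      (hx0.trans ((min_le_left _ _).trans (min_le_right _ _)))
    have hlip : f (x 0) - f xbar ≤ K * ‖x 0 - xbar‖ := by
      simpa [Real.dist_eq, dist_eq_norm] using
        (le_abs_self _).trans (hK.dist_le_mul _ hx01 _ (mem_closedBall_self zero_le_one))
    have hη := (le_div_iff₀' (by positivity)).1 (hx0.trans (min_le_right _ _))
    nlinarith [norm_nonneg (x 0 - xbar)]
  have hdR : ∀ r, ‖x r - xbar‖ ≤ R :=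
    forall_le_of_descent_of_quadratic_growth (fun _ ↦ norm_nonneg _) (half_pos hδ) (by positivity)
      (fun r hr ↦ ⟨(hstep r hr).1, (hstep r hr).2.1⟩) hgrowth
      (hx0.trans ((min_le_left _ _).trans (min_le_left _ _))) hF0
  obtain ⟨a, ha, b, hb, hab⟩ := exists_le_mul_exp_neg_mul_of_dichotomy (fun _ ↦ norm_nonneg _)
    (half_pos hδ) hθ₀ hθ₁ (by linarith) (fun r ↦ hgrowth r ((hdR r).trans (by nlinarith)))
    (fun r ↦ hstep r (hdR r))
  refine ⟨a, ha, b, hb, fun r ↦ (hab r).trans ?_⟩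
  have := Real.sqrt_natCast_le_self r
  exact mul_le_mul_of_nonneg_left (Real.exp_le_exp.2 (by nlinarith)) ha.le
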